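/- arXiv:2201.00260 — 2 statements merged into one kernel-verified Lean document; each statement's English description precedes it below -/
import Mathlib

section
/- Suppose g : (0,T) → ℝ is twice differentiable with g'' > 0, B > 0, and φ(t) ∈ (t,T) is the unique solution of g'(φ(t)) = B/(φ(t)-t)², differentiable in t. Then differentiating the first-order condition yields 0 < φ'(t) < 1, and the function V(t) = g(φ(t)) + B/(φ(t)-t) satisfies V''(t) = 2B(φ(t)-t)(1-φ'(t))/(φ(t)-t)⁴ > 0, hence V is strictly convex. -/
/-!
Differentiating the first-order condition gives `g''(φ t) φ' (φ t - t)³ = 2B(1 - φ')`, so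
`φ' = 2B / (g''(φ t)(φ t - t)³ + 2B) ∈ (0, 1)`. The first-order condition also cancels the
`φ'`-terms of `V'` (envelope theorem), leaving `V' = B / (φ - id)²`, whose derivative is
positive because `φ' < 1`.
-/

open Set Filter Topology

/-- One-sided because at `t = 0` the first-order condition is only known on `[0, T)`. -/
theorem HasDerivAt.eq_of_eventuallyEq_nhdsGE {f g : ℝ → ℝ} {f' g' x : ℝ}
    (hf : HasDerivAt f f' x) (hg : HasDerivAt g g' x) (h : f =ᶠ[𝓝[≥] x] g) : f' = g' :=
  (uniqueDiffWithinAt_Ici x).eq_deriv _ hf.hasDerivWithinAt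
    (hg.hasDerivWithinAt.congr_of_eventuallyEq h (h.eq_of_nhdsWithin self_mem_Ici))

theorem strictConvexOn_of_hasDerivAt2_pos {D : Set ℝ} (hD : Convex ℝ D) {f f' f'' : ℝ → ℝ}
    (hf : ContinuousOn f D) (hf' : ∀ x ∈ interior D, HasDerivAt f (f' x) x)
    (hf'' : ∀ x ∈ interior D, HasDerivAt f' (f'' x) x) (hpos : ∀ x ∈ interior D, 0 < f'' x) :
    StrictConvexOn ℝ D f := by
  have hmono : StrictMonoOn f' (interior D) :=
    strictMonoOn_of_hasDerivWithinAt_pos hD.interior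
      (fun x hx => (hf'' x hx).continuousAt.continuousWithinAt)
      (fun x hx => (hf'' x (interior_interior (s := D) ▸ hx)).hasDerivWithinAt)
      (fun x hx => hpos x (interior_interior (s := D) ▸ hx))
  refine StrictMonoOn.strictConvexOn_of_deriv hD hf fun x hx y hy hxy => ?_
  rw [(hf' x hx).deriv, (hf' y hy).deriv]
  exact hmono hx hy hxy

section Gap

variable {φ : ℝ → ℝ} {φ' t : ℝ}

theorem hasDerivAt_const_div_gap (c : ℝ) (hφ : HasDerivAt φ φ' t) (ht : φ t ≠ t) :
    HasDerivAt (fun s => c / (φ s - s)) (c * (1 - φ') / (φ t - t) ^ 2) t := by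
  have hu : HasDerivAt (fun s => φ s - s) (φ' - 1) t := hφ.sub (hasDerivAt_id' t)
  refine ((hasDerivAt_const t c).div hu (sub_ne_zero.2 ht)).congr_deriv ?_
  ring

theorem hasDerivAt_const_div_gap_sq (c : ℝ) (hφ : HasDerivAt φ φ' t) (ht : φ t ≠ t) :
    HasDerivAt (fun s => c / (φ s - s) ^ 2)
      (2 * c * (φ t - t) * (1 - φ') / (φ t - t) ^ 4) t := by
  have hu : HasDerivAt (fun s => φ s - s) (φ' - 1) t := hφ.sub (hasDerivAt_id' t)
  refine ((hasDerivAt_const t c).div (hu.fun_pow 2)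
    (pow_ne_zero 2 (sub_ne_zero.2 ht))).congr_deriv ?_
  ring

end Gap

theorem mem_Ioo_of_mul_eq_mul_one_sub {a k x : ℝ} (ha : 0 < a) (hk : 0 < k)
    (h : a * x = k * (1 - x)) : x ∈ Ioo 0 1 := by
  have hx : x = k / (a + k) := by
    rw [eq_div_iff (by positivity)]
    linarith
  rw [hx]
  exact ⟨by positivity, (div_lt_one (by positivity)).2 (by linarith)⟩

section FirstOrderCondition

variable {g g' φ : ℝ → ℝ} {B a φ' t : ℝ}

theorem mul_deriv_eq_of_firstOrderCondition (hg' : HasDerivAt g' a (φ t))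
    (hφ : HasDerivAt φ φ' t) (ht : φ t ≠ t)
    (hfoc : ∀ᶠ s in 𝓝[≥] t, g' (φ s) = B / (φ s - s) ^ 2) :
    a * φ' = 2 * B * (φ t - t) / (φ t - t) ^ 4 * (1 - φ') :=
  ((hg'.comp t hφ).eq_of_eventuallyEq_nhdsGE (hasDerivAt_const_div_gap_sq B hφ ht) hfoc).trans
    (by ring)

theorem hasDerivAt_value_of_firstOrderCondition (hg : HasDerivAt g (g' (φ t)) (φ t))
    (hφ : HasDerivAt φ φ' t) (ht : φ t ≠ t) (hfoc : g' (φ t) = B / (φ t - t) ^ 2) :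
    HasDerivAt (fun s => g (φ s) + B / (φ s - s)) (B / (φ t - t) ^ 2) t := by
  refine ((hg.comp t hφ).add (hasDerivAt_const_div_gap B hφ ht)).congr_deriv ?_
  have hgap : φ t - t ≠ 0 := sub_ne_zero.2 ht
  rw [hfoc]
  field_simp
  ring

end FirstOrderCondition

theorem second_derivative_value_function_general (T B : ℝ) (hB : 0 < B)
    (g g' g'' : ℝ → ℝ)
    (hg : ∀ x ∈ Set.Ioo (0:ℝ) T, HasDerivAt g (g' x) x)
    (hg' : ∀ x ∈ Set.Ioo (0:ℝ) T, HasDerivAt g' (g'' x) x)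
    (hg'' : ∀ x ∈ Set.Ioo (0:ℝ) T, 0 < g'' x)
    (φ φ' : ℝ → ℝ)
    (hφmem : ∀ t ∈ Set.Ico (0:ℝ) T, φ t ∈ Set.Ioo t T)
    (hφdiff : ∀ t ∈ Set.Ico (0:ℝ) T, HasDerivAt φ (φ' t) t)
    (hFOC : ∀ t ∈ Set.Ico (0:ℝ) T, g' (φ t) = B / (φ t - t) ^ 2) :
    (∀ t ∈ Set.Ico (0:ℝ) T, 0 < φ' t ∧ φ' t < 1) ∧
    (∃ V' V'' : ℝ → ℝ,
      (∀ t ∈ Set.Ico (0:ℝ) T,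
        HasDerivAt (fun s => g (φ s) + B / (φ s - s)) (V' t) t ∧
        HasDerivAt V' (V'' t) t ∧
        V'' t = 2 * B * (φ t - t) * (1 - φ' t) / (φ t - t) ^ 4 ∧ 0 < V'' t) ∧
      StrictConvexOn ℝ (Set.Ico 0 T) (fun s => g (φ s) + B / (φ s - s))) := by
  have hgap : ∀ t ∈ Ico 0 T, 0 < φ t - t := fun t ht => sub_pos.2 (hφmem t ht).1
  have hφ_mem : ∀ t ∈ Ico 0 T, φ t ∈ Ioo 0 T := fun t ht =>
    ⟨ht.1.trans_lt (hφmem t ht).1, (hφmem t ht).2⟩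
  have hfoc_near : ∀ t ∈ Ico 0 T, ∀ᶠ s in 𝓝[≥] t, g' (φ s) = B / (φ s - s) ^ 2 := by
    intro t ht
    filter_upwards [Ico_mem_nhdsGE ht.2] with s hs using hFOC s ⟨ht.1.trans hs.1, hs.2⟩
  have hφ'_mem : ∀ t ∈ Ico 0 T, φ' t ∈ Ioo 0 1 := fun t ht =>
    have := hgap t ht
    mem_Ioo_of_mul_eq_mul_one_sub (hg'' _ (hφ_mem t ht)) (by positivity)
      (mul_deriv_eq_of_firstOrderCondition (hg' _ (hφ_mem t ht)) (hφdiff t ht)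
        (this.ne' ∘ sub_eq_zero.2) (hfoc_near t ht))
  have hV' : ∀ t ∈ Ico 0 T, HasDerivAt (fun s => g (φ s) + B / (φ s - s)) (B / (φ t - t) ^ 2) t :=
    fun t ht => hasDerivAt_value_of_firstOrderCondition (hg _ (hφ_mem t ht)) (hφdiff t ht)
      ((hgap t ht).ne' ∘ sub_eq_zero.2) (hFOC t ht)
  have hV'' : ∀ t ∈ Ico 0 T, HasDerivAt (fun s => B / (φ s - s) ^ 2)
      (2 * B * (φ t - t) * (1 - φ' t) / (φ t - t) ^ 4) t := fun t ht =>
    hasDerivAt_const_div_gap_sq B (hφdiff t ht) ((hgap t ht).ne' ∘ sub_eq_zero.2)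
  have hpos : ∀ t ∈ Ico 0 T, 0 < 2 * B * (φ t - t) * (1 - φ' t) / (φ t - t) ^ 4 := fun t ht =>
    have := hgap t ht
    div_pos (mul_pos (by positivity) (sub_pos.2 (hφ'_mem t ht).2)) (by positivity)
  refine ⟨hφ'_mem, _, _, fun t ht => ⟨hV' t ht, hV'' t ht, rfl, hpos t ht⟩,
    strictConvexOn_of_hasDerivAt2_pos (convex_Ico 0 T)
      (fun t ht => (hV' t ht).continuousAt.continuousWithinAt)
      (fun t ht => hV' t (interior_subset ht)) (fun t ht => hV'' t (interior_subset ht))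
      (fun t ht => hpos t (interior_subset ht))⟩

/-- Differentiating the first-order condition `g'(φ(t)) = B/(φ(t) - t)²` yields
`0 < φ'(t) < 1`, and `V(t) = g(φ(t)) + B/(φ(t) - t)` satisfies
`V''(t) = 2B(φ(t) - t)(1 - φ'(t))/(φ(t) - t)⁴ > 0`, hence `V` is strictly
convex on `[0,T)`. -/
theorem second_derivative_value_function (T B : ℝ) (hT : 0 < T) (hB : 0 < B)
    (g g' g'' : ℝ → ℝ)
    (hg : ∀ x ∈ Set.Ioo (0:ℝ) T, HasDerivAt g (g' x) x)
    (hg' : ∀ x ∈ Set.Ioo (0:ℝ) T, HasDerivAt g' (g'' x) x)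
    (hg'' : ∀ x ∈ Set.Ioo (0:ℝ) T, 0 < g'' x)
    (φ φ' : ℝ → ℝ)
    (hφmem : ∀ t ∈ Set.Ico (0:ℝ) T, φ t ∈ Set.Ioo t T)
    (hφdiff : ∀ t ∈ Set.Ico (0:ℝ) T, HasDerivAt φ (φ' t) t)
    (hFOC : ∀ t ∈ Set.Ico (0:ℝ) T, g' (φ t) = B / (φ t - t) ^ 2) :
    (∀ t ∈ Set.Ico (0:ℝ) T, 0 < φ' t ∧ φ' t < 1) ∧
    (∃ V' V'' : ℝ → ℝ,
      (∀ t ∈ Set.Ico (0:ℝ) T,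
        HasDerivAt (fun s => g (φ s) + B / (φ s - s)) (V' t) t ∧
        HasDerivAt V' (V'' t) t ∧
        V'' t = 2 * B * (φ t - t) * (1 - φ' t) / (φ t - t) ^ 4 ∧ 0 < V'' t) ∧
      StrictConvexOn ℝ (Set.Ico 0 T) (fun s => g (φ s) + B / (φ s - s))) :=
  second_derivative_value_function_general T B hB g g' g'' hg hg' hg'' φ φ' hφmem hφdiff hFOC
end

section
/- Suppose the cost C satisfies: C is differentiable in the switching time τ with ∂C/∂τ(p,p',t,τ,ρ) strictly increasing in the quantity τ - t, and V(p',·,ρ) is convex and differentiable on [0,T). If decision times t_1 < t_2 optimally generate switching times τ_1, τ_2 < T respectively (i.e., τ_i minimizes τ ↦ V(p',τ,ρ) + C(p,p',t_i,τ,ρ) over (t_i,T]), then τ_1 ≤ τ_2. Moreover, two distinct decision times cannot optimally generate the same switching time τ < T. -/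
/-!
The marginal cost `∂C/∂τ = h (τ - t)` is larger for an earlier decision time, so
`τ ↦ C t₁ τ - C t₂ τ` is strictly increasing when `t₁ < t₂`. Comparing each optimum with the
other candidate (a revealed-preference argument) then forces `τ₁ ≤ τ₂`. If `τ₁ = τ₂ = τ < T`,
then `τ` is an interior minimum of both objectives, so the first-order conditions give
`V' τ + h (τ - t₁) = 0 = V' τ + h (τ - t₂)`, contradicting the injectivity of `h`.
-/

open Set

lemma le_of_isMinOn_of_strictMonoOn_sub {α β : Type*} [LinearOrder α]
    [AddCommGroup β] [PartialOrder β] [IsOrderedAddMonoid β]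
    {F₁ F₂ : α → β} {s₁ s₂ u : Set α} {x₁ x₂ : α}
    (h₁ : IsMinOn F₁ s₁ x₁) (h₂ : IsMinOn F₂ s₂ x₂) (hx₂ : x₂ ∈ s₁) (hx₁ : x₁ ∈ s₂)
    (hmono : StrictMonoOn (fun x => F₁ x - F₂ x) u) (hu₁ : x₁ ∈ u) (hu₂ : x₂ ∈ u) :
    x₁ ≤ x₂ := by
  have hF₁ : F₁ x₁ ≤ F₁ x₂ := h₁ hx₂
  have hF₂ : F₂ x₂ ≤ F₂ x₁ := h₂ hx₁
  refine (hmono.le_iff_le hu₁ hu₂).1 ?_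
  calc F₁ x₁ - F₂ x₁ ≤ F₁ x₂ - F₂ x₁ := sub_le_sub_right hF₁ _
    _ ≤ F₁ x₂ - F₂ x₂ := sub_le_sub_left hF₂ _

lemma strictMonoOn_sub_of_hasDerivAt_strictMono {C : ℝ → ℝ → ℝ} {h : ℝ → ℝ}
    (hmono : StrictMono h) (hC : ∀ t τ : ℝ, t < τ → HasDerivAt (C t) (h (τ - t)) τ)
    {t₁ t₂ : ℝ} (ht : t₁ < t₂) :
    StrictMonoOn (fun τ => C t₁ τ - C t₂ τ) (Ioi t₂) := by
  have hderiv : ∀ τ ∈ Ioi t₂,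
      HasDerivAt (fun τ => C t₁ τ - C t₂ τ) (h (τ - t₁) - h (τ - t₂)) τ :=
    fun τ hτ => (hC t₁ τ (ht.trans hτ)).sub (hC t₂ τ hτ)
  refine strictMonoOn_of_hasDerivWithinAt_pos (f' := fun τ => h (τ - t₁) - h (τ - t₂))
    (convex_Ioi t₂)
    (fun τ hτ => (hderiv τ hτ).continuousAt.continuousWithinAt) (fun τ hτ => ?_) (fun τ _ => ?_)
  · rw [interior_Ioi] at hτ ⊢
    exact (hderiv τ hτ).hasDerivWithinAt
  · exact sub_pos.2 (hmono (by linarith))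

lemma hasDerivAt_unique_of_isLocalMin_add {V f₁ f₂ : ℝ → ℝ} {v a₁ a₂ τ : ℝ}
    (hV : HasDerivAt V v τ) (hf₁ : HasDerivAt f₁ a₁ τ) (hf₂ : HasDerivAt f₂ a₂ τ)
    (hmin₁ : IsLocalMin (fun x => V x + f₁ x) τ) (hmin₂ : IsLocalMin (fun x => V x + f₂ x) τ) :
    a₁ = a₂ := by
  have h₁ : v + a₁ = 0 := hmin₁.hasDerivAt_eq_zero (hV.add hf₁)
  have h₂ : v + a₂ = 0 := hmin₂.hasDerivAt_eq_zero (hV.add hf₂)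
  linarith

theorem switching_times_ordered_general (T : ℝ)
    (V V' : ℝ → ℝ)
    (hVdiff : ∀ s ∈ Set.Ico (0:ℝ) T, HasDerivAt V (V' s) s)
    (C : ℝ → ℝ → ℝ) (h : ℝ → ℝ) (hmono : StrictMono h)
    (hC : ∀ t τ : ℝ, t < τ → HasDerivAt (C t) (h (τ - t)) τ)
    (t₁ t₂ τ₁ τ₂ : ℝ) (ht₁ : 0 ≤ t₁) (ht : t₁ < t₂)
    (hτ₁T : τ₁ < T)
    (hτ₁ : τ₁ ∈ Set.Ioc t₁ T)
    (hopt₁ : ∀ τ ∈ Set.Ioc t₁ T, V τ₁ + C t₁ τ₁ ≤ V τ + C t₁ τ)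
    (hτ₂ : τ₂ ∈ Set.Ioc t₂ T)
    (hopt₂ : ∀ τ ∈ Set.Ioc t₂ T, V τ₂ + C t₂ τ₂ ≤ V τ + C t₂ τ) :
    τ₁ ≤ τ₂ ∧ τ₁ ≠ τ₂ := by
  rcases le_or_gt τ₁ t₂ with hle | hgt
  · have hlt : τ₁ < τ₂ := hle.trans_lt hτ₂.1
    exact ⟨hlt.le, hlt.ne⟩
  have hmin₁ : IsMinOn (fun τ => V τ + C t₁ τ) (Ioc t₁ T) τ₁ := isMinOn_iff.2 hopt₁
  have hmin₂ : IsMinOn (fun τ => V τ + C t₂ τ) (Ioc t₂ T) τ₂ := isMinOn_iff.2 hopt₂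
  have hsub : StrictMonoOn (fun τ => (V τ + C t₁ τ) - (V τ + C t₂ τ)) (Ioi t₂) := by
    simpa only [add_sub_add_left_eq_sub] using strictMonoOn_sub_of_hasDerivAt_strictMono hmono hC ht
  have hle : τ₁ ≤ τ₂ := le_of_isMinOn_of_strictMonoOn_sub hmin₁ hmin₂
    ⟨ht.trans hτ₂.1, hτ₂.2⟩ ⟨hgt, hτ₁.2⟩ hsub hgt hτ₂.1
  refine ⟨hle, fun heq => ?_⟩
  subst heq
  have hderiv_eq : h (τ₁ - t₁) = h (τ₁ - t₂) :=
    hasDerivAt_unique_of_isLocalMin_add (hVdiff τ₁ ⟨ht₁.trans hτ₁.1.le, hτ₁T⟩)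
      (hC t₁ τ₁ hτ₁.1) (hC t₂ τ₁ hgt)
      (hmin₁.isLocalMin (Ioc_mem_nhds hτ₁.1 hτ₁T)) (hmin₂.isLocalMin (Ioc_mem_nhds hgt hτ₁T))
  linarith [hmono.injective hderiv_eq]

/-- If the switching cost has `∂C/∂τ` strictly increasing in `τ - t` and the value
function `V` is convex and differentiable on `[0,T)`, then decision times
`t₁ < t₂` optimally generate switching times `τ₁ ≤ τ₂`; moreover two distinct
decision times cannot optimally generate the same switching time `< T`. -/
theorem switching_times_ordered (T : ℝ) (hT : 0 < T)
    (V V' : ℝ → ℝ)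
    (hVconv : ConvexOn ℝ (Set.Ico 0 T) V)
    (hVdiff : ∀ s ∈ Set.Ico (0:ℝ) T, HasDerivAt V (V' s) s)
    (C : ℝ → ℝ → ℝ) (h : ℝ → ℝ) (hmono : StrictMono h)
    (hC : ∀ t τ : ℝ, t < τ → HasDerivAt (C t) (h (τ - t)) τ)
    (t₁ t₂ τ₁ τ₂ : ℝ) (ht₁ : 0 ≤ t₁) (ht : t₁ < t₂) (ht₂ : t₂ < T)
    (hτ₁T : τ₁ < T) (hτ₂T : τ₂ < T)
    (hτ₁ : τ₁ ∈ Set.Ioc t₁ T)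
    (hopt₁ : ∀ τ ∈ Set.Ioc t₁ T, V τ₁ + C t₁ τ₁ ≤ V τ + C t₁ τ)
    (hτ₂ : τ₂ ∈ Set.Ioc t₂ T)
    (hopt₂ : ∀ τ ∈ Set.Ioc t₂ T, V τ₂ + C t₂ τ₂ ≤ V τ + C t₂ τ) :
    τ₁ ≤ τ₂ ∧ τ₁ ≠ τ₂ :=
  switching_times_ordered_general T V V' hVdiff C h hmono hC t₁ t₂ τ₁ τ₂ ht₁ ht hτ₁T hτ₁ hopt₁ hτ₂
    hopt₂
end
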